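/- Let k be even and G = G_0(u) ⋄ H(u) be a connected k-uniform hypergraph which is the coalescence of G_0 and H at u, where H is odd-bipartite. If x is a first eigenvector of G with x_u = 0, then Π_{v ∈ e\{u}} x_v = 0 for each edge e of H containing u. -/

import Mathlib

open Finset BigOperators

variable {V : Type*}

/-- A `k`-uniform hypergraph given by its edge set: every edge has exactly `k` vertices. -/
def Uniform [DecidableEq V] (E : Finset (Finset V)) (k : ℕ) : Prop :=
  ∀ e ∈ E, e.card = k

/-- Two vertices are adjacent if some edge contains both. -/
def HAdj [DecidableEq V] (E : Finset (Finset V)) (a b : V) : Prop :=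
  a ≠ b ∧ ∃ e ∈ E, a ∈ e ∧ b ∈ e

/-- The hypergraph is connected: every two vertices are joined by a walk. -/
def HConnected [DecidableEq V] (E : Finset (Finset V)) : Prop :=
  ∀ a b : V, Relation.ReflTransGen (HAdj E) a b

/-- `(lam, x)` satisfies the H-eigen equations of the adjacency tensor:
for each vertex `v`, `∑_{e ∋ v} ∏_{w ∈ e \ {v}} x w = lam * (x v)^(k-1)`. -/
def isEig [Fintype V] [DecidableEq V] (E : Finset (Finset V)) (k : ℕ) (lam : ℝ) (x : V → ℝ) :
    Prop :=
  ∀ v : V, (∑ e ∈ E.filter (fun e => v ∈ e), ∏ w ∈ e.erase v, x w) = lam * x v ^ (k - 1)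

/-- The set of H-eigenvalues of the adjacency tensor of the hypergraph. -/
def specH [Fintype V] [DecidableEq V] (E : Finset (Finset V)) (k : ℕ) : Set ℝ :=
  {lam | ∃ x : V → ℝ, x ≠ 0 ∧ isEig E k lam x}

/-- The least H-eigenvalue of the adjacency tensor. -/
noncomputable def lamMin [Fintype V] [DecidableEq V] (E : Finset (Finset V)) (k : ℕ) : ℝ :=
  sInf (specH E k)

/-- A first eigenvector: a real eigenvector associated with the least H-eigenvalue. -/
def IsFirstEigvec [Fintype V] [DecidableEq V] (E : Finset (Finset V)) (k : ℕ) (x : V → ℝ) :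
    Prop :=
  x ≠ 0 ∧ isEig E k (lamMin E k) x

/-!
`λ_min` is the minimum of `k F(z) / N(z)` over `z ≠ 0`, where `F = adjForm E` and `N = powSum k`
(compactness of `{N = 1}` and homogeneity), and every vector attaining it is an eigenvector
for `λ_min`, because the coordinate derivatives of `k F - λ_min N` are `k` times the
eigen-equations.

Since `x_u = 0`, both `F(x)` and `N(x)` split into the contributions of `V₀` and of `V_H ∖ {u}`.
Replace the `H`-part of `x` by `y_v = ± |x_v|`, the sign being `-` exactly on the odd-bipartition
class `S`. This keeps `N`, and turns every edge product of `H` into `-|Π_{v ∈ e} x_v|`, so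
`F` does not grow: `y` attains `λ_min`, hence is an eigenvector with `y_u = 0`. Its
eigen-equation at `u` says that `Σ_{e ∋ u} Π_{v ∈ e ∖ u} y_v = 0`, and after multiplying by
the sign of `u` every term of this sum is `-|Π_{v ∈ e ∖ u} x_v|` or `0`.
-/

def adjForm (E : Finset (Finset V)) (z : V → ℝ) : ℝ :=
  ∑ e ∈ E, ∏ v ∈ e, z v

def powSum [Fintype V] (k : ℕ) (z : V → ℝ) : ℝ :=
  ∑ v, z v ^ k

section Forms

variable {E : Finset (Finset V)} {k : ℕ}

theorem Uniform.nonempty [DecidableEq V] (hU : Uniform E k) (hk : k ≠ 0) {e : Finset V}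
    (he : e ∈ E) : e.Nonempty :=
  card_pos.mp (by rw [hU e he]; omega)

theorem adjForm_zero (hE : ∀ e ∈ E, e.Nonempty) : adjForm E 0 = 0 :=
  sum_eq_zero fun e he => prod_eq_zero (hE e he).choose_spec rfl

theorem adjForm_smul [DecidableEq V] (hU : Uniform E k) (c : ℝ) (z : V → ℝ) :
    adjForm E (c • z) = c ^ k * adjForm E z := by
  rw [adjForm, adjForm, mul_sum]
  refine sum_congr rfl fun e he => ?_
  simp only [Pi.smul_apply, smul_eq_mul, prod_mul_distrib, prod_const, hU e he]

theorem continuous_adjForm (E : Finset (Finset V)) : Continuous (adjForm E) :=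
  continuous_finsetSum _ fun _ _ => continuous_finsetProd _ fun v _ => continuous_apply v

theorem adjForm_piecewise_add [DecidableEq V] {z : V → ℝ} (T : Finset V)
    (hE : ∀ e ∈ E, e.Nonempty) (hsplit : ∀ e ∈ E, e ⊆ T ∨ Disjoint e T ∨ ∃ v ∈ e, z v = 0) :
    adjForm E z = adjForm E (T.piecewise 0 z) + adjForm E (T.piecewise z 0) := by
  rw [adjForm, adjForm, adjForm, ← sum_add_distrib]
  refine sum_congr rfl fun e he => ?_
  obtain ⟨v, hv⟩ := hE e he
  rcases hsplit e he with hT | hT | ⟨w, hw, hzw⟩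
  · rw [prod_eq_zero (f := T.piecewise 0 z) hv (piecewise_eq_of_mem _ _ _ (hT hv)), zero_add]
    exact prod_congr rfl fun w hw => (piecewise_eq_of_mem _ _ _ (hT hw)).symm
  · have hv' := disjoint_left.mp hT hv
    rw [prod_eq_zero (f := T.piecewise z 0) hv (piecewise_eq_of_notMem _ _ _ hv'), add_zero]
    exact prod_congr rfl fun w hw => (piecewise_eq_of_notMem _ _ _ (disjoint_left.mp hT hw)).symm
  · have hpw (f g : V → ℝ) (hf : f w = 0) (hg : g w = 0) : T.piecewise f g w = 0 := by
      by_cases h : w ∈ T <;> simp [h, hf, hg]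
    rw [prod_eq_zero hw hzw, prod_eq_zero hw (hpw _ _ rfl hzw), prod_eq_zero hw (hpw _ _ hzw rfl),
      add_zero]

theorem adjForm_update [DecidableEq V] (E : Finset (Finset V)) (z : V → ℝ) (v : V) (t : ℝ) :
    adjForm E (Function.update z v t) =
      t * ∑ e ∈ E with v ∈ e, ∏ w ∈ e.erase v, z w + ∑ e ∈ E with v ∉ e, ∏ w ∈ e, z w := by
  rw [adjForm, ← sum_filter_add_sum_filter_not E (v ∈ ·), mul_sum]
  congr 1
  · exact sum_congr rfl fun e he => by
      rw [prod_update_of_mem (mem_filter.mp he).2, ← erase_eq]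
  · exact sum_congr rfl fun e he => prod_update_of_notMem (mem_filter.mp he).2 z t

variable [Fintype V]

theorem powSum_zero (hk : k ≠ 0) : powSum k (0 : V → ℝ) = 0 := by
  simp [powSum, zero_pow hk]

theorem powSum_pos (hk : Even k) {z : V → ℝ} (hz : z ≠ 0) : 0 < powSum k z := by
  obtain ⟨v, hv⟩ := Function.ne_iff.mp hz
  exact lt_of_lt_of_le (hk.pow_pos hv)
    (single_le_sum (fun w _ => hk.pow_nonneg (z w)) (mem_univ v))

theorem powSum_smul (k : ℕ) (c : ℝ) (z : V → ℝ) : powSum k (c • z) = c ^ k * powSum k z := by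
  simp only [powSum, mul_sum, Pi.smul_apply, smul_eq_mul, mul_pow]

theorem continuous_powSum (k : ℕ) : Continuous (powSum (V := V) k) :=
  continuous_finsetSum _ fun v _ => (continuous_apply v).pow k

theorem powSum_congr_abs (hk : Even k) {y z : V → ℝ} (h : ∀ v, |y v| = |z v|) :
    powSum k y = powSum k z :=
  sum_congr rfl fun v _ => by rw [← hk.pow_abs, h, hk.pow_abs]

theorem powSum_piecewise_add [DecidableEq V] (hk : k ≠ 0) (T : Finset V) (z : V → ℝ) :
    powSum k z = powSum k (T.piecewise 0 z) + powSum k (T.piecewise z 0) := by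
  rw [powSum, powSum, powSum, ← sum_add_distrib]
  refine sum_congr rfl fun v _ => ?_
  by_cases hv : v ∈ T <;> simp [hv, zero_pow hk]

theorem powSum_update [DecidableEq V] (k : ℕ) (z : V → ℝ) (v : V) (t : ℝ) :
    powSum k (Function.update z v t) = t ^ k + ∑ w ∈ univ.erase v, z w ^ k := by
  rw [powSum, ← add_sum_erase _ _ (mem_univ v), Function.update_self]
  congr 1
  exact sum_congr rfl fun w hw => by rw [Function.update_of_ne (ne_of_mem_erase hw)]

theorem isCompact_powSum_eq_one (hk : Even k) (hk0 : k ≠ 0) :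
    IsCompact {z : V → ℝ | powSum k z = 1} := by
  refine Metric.isCompact_of_isClosed_isBounded
    (isClosed_singleton.preimage (continuous_powSum k)) ?_
  refine (Metric.isBounded_closedBall (x := (0 : V → ℝ)) (r := 1)).subset fun z hz => ?_
  rw [mem_closedBall_zero_iff, pi_norm_le_iff_of_nonneg zero_le_one]
  intro v
  have hv : z v ^ k ≤ 1 :=
    hz ▸ single_le_sum (fun w _ => hk.pow_nonneg (z w)) (mem_univ v)
  rw [← hk.pow_abs] at hv
  exact (pow_le_one_iff_of_nonneg (abs_nonneg _) hk0).mp hv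

end Forms

section Eigen

variable [Fintype V] [DecidableEq V] {E : Finset (Finset V)} {k : ℕ}

theorem isEig.mul_adjForm_eq {lam : ℝ} {x : V → ℝ} (h : isEig E k lam x) (hU : Uniform E k)
    (hk : k ≠ 0) : k * adjForm E x = lam * powSum k x := by
  have hdouble : ∑ v, x v * ∑ e ∈ E with v ∈ e, ∏ w ∈ e.erase v, x w = k * adjForm E x := by
    calc ∑ v, x v * ∑ e ∈ E with v ∈ e, ∏ w ∈ e.erase v, x w
        = ∑ v, ∑ e ∈ E with v ∈ e, ∏ w ∈ e, x w := by
          refine sum_congr rfl fun v _ => ?_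
          rw [mul_sum]
          exact sum_congr rfl fun e he => mul_prod_erase e x (mem_filter.mp he).2
      _ = ∑ e ∈ E, ∑ v ∈ e, ∏ w ∈ e, x w :=
          sum_comm' fun v e => by simp only [mem_univ, mem_filter, true_and, and_comm]
      _ = k * adjForm E x := by
          rw [adjForm, mul_sum]
          exact sum_congr rfl fun e he => by rw [sum_const, hU e he, nsmul_eq_mul]
  rw [← hdouble, powSum, mul_sum]
  refine sum_congr rfl fun v _ => ?_
  rw [h v, mul_left_comm, ← pow_succ', Nat.sub_add_cancel (Nat.one_le_iff_ne_zero.mpr hk)]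

theorem isEig_of_forall_le (hk : k ≠ 0) {mu : ℝ} {z : V → ℝ}
    (hmin : ∀ w, mu * powSum k w ≤ k * adjForm E w) (heq : k * adjForm E z = mu * powSum k z) :
    isEig E k mu z := by
  intro v
  set A := ∑ e ∈ E with v ∈ e, ∏ w ∈ e.erase v, z w
  set B := ∑ e ∈ E with v ∉ e, ∏ w ∈ e, z w
  set C := ∑ w ∈ univ.erase v, z w ^ k
  set g : ℝ → ℝ := fun t => k * (t * A + B) - mu * (t ^ k + C)
  have hg (t : ℝ) : g t = k * adjForm E (Function.update z v t) -
      mu * powSum k (Function.update z v t) := by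
    rw [adjForm_update, powSum_update]
  have hloc : IsLocalMin g (z v) := Filter.Eventually.of_forall fun t => by
    rw [hg, hg, Function.update_eq_self, heq, sub_self, sub_nonneg]
    exact hmin _
  have hderiv : HasDerivAt g (k * A - mu * (k * z v ^ (k - 1))) (z v) :=
    (((hasDerivAt_mul_const A).add_const B).const_mul _).sub
      (((hasDerivAt_pow k (z v)).add_const C).const_mul _)
  have hcrit := hloc.hasDerivAt_eq_zero hderiv
  have hk' : (k : ℝ) ≠ 0 := Nat.cast_ne_zero.mpr hk
  apply mul_left_cancel₀ hk'
  linear_combination hcrit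

end Eigen

section Variational

variable [Fintype V] [DecidableEq V] {E : Finset (Finset V)} {k : ℕ}

theorem adjForm_mul_powSum_le_of_isMinOn (hU : Uniform E k) (hk : Even k) (hk0 : k ≠ 0)
    {z₀ : V → ℝ} (hz₀ : IsMinOn (adjForm E) {z | powSum k z = 1} z₀) (z : V → ℝ) :
    adjForm E z₀ * powSum k z ≤ adjForm E z := by
  rcases eq_or_ne z 0 with rfl | hz
  · rw [powSum_zero hk0, adjForm_zero fun e he => hU.nonempty hk0 he, mul_zero]
  have hN := powSum_pos hk hz
  set c : ℝ := powSum k z ^ (k : ℝ)⁻¹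
  have hck : c ^ k = powSum k z := Real.rpow_inv_natCast_pow hN.le hk0
  have hmem : c⁻¹ • z ∈ {z | powSum k z = 1} := by
    rw [Set.mem_ofPred_eq, powSum_smul, inv_pow, hck, inv_mul_cancel₀ hN.ne']
  have hle : adjForm E z₀ ≤ (c ^ k)⁻¹ * adjForm E z := by
    simpa only [Set.mem_ofPred_eq, adjForm_smul hU, inv_pow] using hz₀ hmem
  rwa [← hck, ← le_inv_mul_iff₀' (hck ▸ hN)]

theorem isLeast_specH (hU : Uniform E k) (hk : Even k) (hk0 : k ≠ 0) {mu : ℝ}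
    (hmin : ∀ w, mu * powSum k w ≤ k * adjForm E w) {z : V → ℝ} (hz : z ≠ 0)
    (heq : k * adjForm E z = mu * powSum k z) : IsLeast (specH E k) mu := by
  refine ⟨⟨z, hz, isEig_of_forall_le hk0 hmin heq⟩, ?_⟩
  rintro lam ⟨y, hy, hyeig⟩
  have := hmin y
  rw [hyeig.mul_adjForm_eq hU hk0] at this
  exact le_of_mul_le_mul_right this (powSum_pos hk hy)

theorem lamMin_mul_powSum_le [Nonempty V] (hU : Uniform E k) (hk : Even k) (hk0 : k ≠ 0)
    (z : V → ℝ) : lamMin E k * powSum k z ≤ k * adjForm E z := by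
  obtain ⟨z₀, hz₀, hmin⟩ := (isCompact_powSum_eq_one hk hk0).exists_isMinOn
    ⟨Pi.single (Classical.arbitrary V) 1, by simp [powSum, Pi.single_apply, zero_pow hk0]⟩
    (continuous_adjForm E).continuousOn
  have hbound (w : V → ℝ) : k * adjForm E z₀ * powSum k w ≤ k * adjForm E w := by
    rw [mul_assoc]
    exact mul_le_mul_of_nonneg_left (adjForm_mul_powSum_le_of_isMinOn hU hk hk0 hmin w)
      (Nat.cast_nonneg k)
  have hz₀ne : z₀ ≠ 0 := by
    rintro rfl
    exact zero_ne_one ((powSum_zero hk0).symm.trans hz₀)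
  have hleast := isLeast_specH hU hk hk0 hbound hz₀ne (by rw [Set.mem_ofPred_eq.mp hz₀, mul_one])
  rw [lamMin, hleast.csInf_eq]
  exact hbound z

end Variational

section Signs

variable [DecidableEq V] {S e : Finset V}

def signOn (S : Finset V) (v : V) : ℝ :=
  if v ∈ S then -1 else 1

theorem abs_signOn (S : Finset V) (v : V) : |signOn S v| = 1 := by
  unfold signOn; split_ifs <;> simp

theorem prod_signOn_of_odd (h : Odd #(e ∩ S)) : ∏ v ∈ e, signOn S v = -1 := by
  simp only [signOn]
  rw [prod_ite, prod_const, prod_const, filter_mem_eq_inter, h.neg_one_pow]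
  simp

theorem adjForm_signOn_mul_abs_le {E : Finset (Finset V)} {z : V → ℝ}
    (hE : ∀ e ∈ E, ∏ v ∈ e, z v = 0 ∨ Odd #(e ∩ S)) :
    adjForm E (fun v => signOn S v * |z v|) ≤ adjForm E z := by
  refine sum_le_sum fun e he => ?_
  rw [prod_mul_distrib, ← abs_prod]
  rcases hE e he with h | h
  · rw [h, abs_zero, mul_zero]
  · rw [prod_signOn_of_odd h, neg_one_mul]
    exact neg_abs_le _

theorem signOn_mul_prod_erase_signOn_mul_abs (h : Odd #(e ∩ S)) {u : V}
    (hu : u ∈ e) (z : V → ℝ) :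
    signOn S u * ∏ v ∈ e.erase u, signOn S v * |z v| = -|∏ v ∈ e.erase u, z v| := by
  rw [prod_mul_distrib, ← mul_assoc, mul_prod_erase e _ hu, prod_signOn_of_odd h, abs_prod,
    neg_one_mul]

end Signs

theorem isEig.mul_prod_erase_eq_zero_of_nonpos [Fintype V] [DecidableEq V]
    {E : Finset (Finset V)} {k : ℕ} {lam : ℝ} {y : V → ℝ} (h : isEig E k lam y) (hk : 2 ≤ k)
    {u : V} (hu : y u = 0) {c : ℝ} (hc : ∀ e ∈ E, u ∈ e → c * ∏ w ∈ e.erase u, y w ≤ 0) :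
    ∀ e ∈ E, u ∈ e → c * ∏ w ∈ e.erase u, y w = 0 := by
  have hsum : ∑ e ∈ E with u ∈ e, c * ∏ w ∈ e.erase u, y w = 0 := by
    rw [← mul_sum, h u, hu, zero_pow (by omega), mul_zero, mul_zero]
  intro e he hue
  exact (sum_eq_zero_iff_of_nonpos fun e he => hc e (mem_filter.mp he).1 (mem_filter.mp he).2).mp
    hsum e (mem_filter.mpr ⟨he, hue⟩)

theorem notMem_erase_of_inter_eq_singleton [DecidableEq V] {A B : Finset V} {u v : V}
    (hAB : A ∩ B = {u}) (hv : v ∈ A) : v ∉ B.erase u := fun h =>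
  (mem_erase.mp h).1 (mem_singleton.mp (hAB ▸ mem_inter.mpr ⟨hv, (mem_erase.mp h).2⟩))

theorem isEig_lamMin_signOn_mul_abs_piecewise [Fintype V] [DecidableEq V] {V0 VH : Finset V}
    {u : V} {E0 EH : Finset (Finset V)} {k : ℕ} (hI : V0 ∩ VH = {u})
    (hE0 : ∀ e ∈ E0, e ⊆ V0) (hEH : ∀ e ∈ EH, e ⊆ VH) (hU : Uniform (E0 ∪ EH) k)
    (hk : Even k) (hk0 : k ≠ 0) {S : Finset V} (hS : ∀ e ∈ EH, Odd #(e ∩ S)) {x : V → ℝ}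
    (hx : isEig (E0 ∪ EH) k (lamMin (E0 ∪ EH) k) x) (hxu : x u = 0) :
    isEig (E0 ∪ EH) k (lamMin (E0 ∪ EH) k)
      (fun v => signOn S v * |(VH.erase u).piecewise x 0 v|) := by
  have : Nonempty V := ⟨u⟩
  have hne : ∀ e ∈ E0 ∪ EH, e.Nonempty := fun e he => hU.nonempty hk0 he
  have hV0 : ∀ e ∈ E0, ∀ v ∈ e, v ∉ VH.erase u := fun e he v hv =>
    notMem_erase_of_inter_eq_singleton hI (hE0 e he hv)
  set x₂ := (VH.erase u).piecewise x 0
  set y := fun v => signOn S v * |x₂ v|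
  have hsplit : adjForm (E0 ∪ EH) x = adjForm (E0 ∪ EH) ((VH.erase u).piecewise 0 x) +
      adjForm (E0 ∪ EH) x₂ := adjForm_piecewise_add (VH.erase u) hne fun e he => by
    rcases mem_union.mp he with he | he
    · exact .inr (.inl (disjoint_left.mpr (hV0 e he)))
    · by_cases hue : u ∈ e
      · exact .inr (.inr ⟨u, hue, hxu⟩)
      · exact .inl fun v hv => mem_erase.mpr ⟨ne_of_mem_of_not_mem hv hue, hEH e he hv⟩
  have hflip : adjForm (E0 ∪ EH) y ≤ adjForm (E0 ∪ EH) x₂ :=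
    adjForm_signOn_mul_abs_le fun e he => by
      rcases mem_union.mp he with he | he
      · obtain ⟨v, hv⟩ := hne e (mem_union_left _ he)
        exact .inl (prod_eq_zero hv (piecewise_eq_of_notMem _ _ _ (hV0 e he v hv)))
      · exact .inr (hS e he)
  have hNy : powSum k y = powSum k x₂ :=
    powSum_congr_abs hk fun v => by rw [abs_mul, abs_signOn, one_mul, abs_abs]
  have hmin := lamMin_mul_powSum_le hU hk hk0
  refine isEig_of_forall_le hk0 hmin ?_
  have hkflip := mul_le_mul_of_nonneg_left hflip (Nat.cast_nonneg (α := ℝ) k)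
  have hx' := hx.mul_adjForm_eq hU hk0
  rw [hsplit, powSum_piecewise_add hk0 (VH.erase u) x, mul_add, mul_add] at hx'
  rw [hNy]
  linarith [hmin ((VH.erase u).piecewise 0 x), hNy ▸ hmin y]

theorem stmt6_general [Fintype V] [DecidableEq V]
    (V0 VH : Finset V) (u : V) (E0 EH : Finset (Finset V)) (k : ℕ)
    (hk : Even k) (hk0 : 0 < k)
    (hI : V0 ∩ VH = {u})
    (hE0 : ∀ e ∈ E0, e ⊆ V0) (hEH : ∀ e ∈ EH, e ⊆ VH)
    (hU : Uniform (E0 ∪ EH) k)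
    (hodd : ∃ S ⊆ VH, ∀ e ∈ EH, Odd ((e ∩ S).card))
    (x : V → ℝ) (hx : IsFirstEigvec (E0 ∪ EH) k x) (hxu : x u = 0) :
    ∀ e ∈ EH, u ∈ e → (∏ w ∈ e.erase u, x w) = 0 := by
  obtain ⟨S, -, hS⟩ := hodd
  have hk2 : 2 ≤ k := by obtain ⟨m, rfl⟩ := hk; omega
  set y := fun v => signOn S v * |(VH.erase u).piecewise x 0 v|
  have hy := isEig_lamMin_signOn_mul_abs_piecewise hI hE0 hEH hU hk hk0.ne' hS hx.2 hxu
  have hH (e) (he : e ∈ EH) (hue : u ∈ e) :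
      signOn S u * ∏ w ∈ e.erase u, y w = -|∏ w ∈ e.erase u, x w| := by
    rw [signOn_mul_prod_erase_signOn_mul_abs (hS e he) hue]
    congr 2
    exact prod_congr rfl fun w hw =>
      piecewise_eq_of_mem _ _ _ (erase_subset_erase u (hEH e he) hw)
  have h0 (e) (he : e ∈ E0) (hue : u ∈ e) : ∏ w ∈ e.erase u, y w = 0 := by
    obtain ⟨v, hv, hvu⟩ := exists_mem_ne (by rw [hU e (mem_union_left _ he)]; omega) u
    refine prod_eq_zero (mem_erase.mpr ⟨hvu, hv⟩) ?_
    simp [y, notMem_erase_of_inter_eq_singleton hI (hE0 e he hv)]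
  have hzero := hy.mul_prod_erase_eq_zero_of_nonpos hk2 (u := u) (by simp) fun e he hue => by
    rcases mem_union.mp he with he | he
    · rw [h0 e he hue, mul_zero]
    · rw [hH e he hue]
      exact neg_nonpos.mpr (abs_nonneg _)
  intro e he hue
  have := hzero e (mem_union_right _ he) hue
  rwa [hH e he hue, neg_eq_zero, abs_eq_zero] at this

/-- If `H` is odd-bipartite and `x` is a first eigenvector of `G = G₀(u) ⋄ H(u)` with `x u = 0`, then `∏_{v ∈ e∖{u}} x v = 0` for every edge `e` of `H` containing `u`. -/
theorem stmt6 [Fintype V] [DecidableEq V]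
    (V0 VH : Finset V) (u : V) (E0 EH : Finset (Finset V)) (k : ℕ)
    (hk : Even k) (hk0 : 0 < k)
    (hI : V0 ∩ VH = {u}) (hcover : V0 ∪ VH = Finset.univ)
    (hE0 : ∀ e ∈ E0, e ⊆ V0) (hEH : ∀ e ∈ EH, e ⊆ VH)
    (hU : Uniform (E0 ∪ EH) k) (hconn : HConnected (E0 ∪ EH))
    (hE0ne : E0.Nonempty) (hEHne : EH.Nonempty)
    (hodd : ∃ S ⊆ VH, ∀ e ∈ EH, Odd ((e ∩ S).card))
    (x : V → ℝ) (hx : IsFirstEigvec (E0 ∪ EH) k x) (hxu : x u = 0) :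
    ∀ e ∈ EH, u ∈ e → (∏ w ∈ e.erase u, x w) = 0 :=
  stmt6_general V0 VH u E0 EH k hk hk0 hI hE0 hEH hU hodd x hx hxu
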